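/- Let R be a commutative ring, let x ∈ R, let a = (a_1, a_2, …) be a sequence in R, and let m ≥ 0 be an integer. Then h^{gl}_m((x)|a) = (x|a)^m; that is, the coefficient of t^m in the formal power series (1−tx)^{−1} · ∏_{j=1}^{m}(1+t a_j) in R[[t]] equals the factorial power (x+a_1)(x+a_2)⋯(x+a_m). -/

import Mathlib

open Finset

noncomputable def geom {R : Type*} [CommRing R] (x : R) : PowerSeries R :=
  PowerSeries.mk fun k => x ^ k

noncomputable def lin {R : Type*} [CommRing R] (a : R) : PowerSeries R :=
  1 + PowerSeries.C a * PowerSeries.X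

noncomputable def facpow {R : Type*} [CommRing R] (x : R) (a : ℕ → R) (m : ℕ) : R :=
  ∏ j ∈ Finset.range m, (x + a (j + 1))

noncomputable def hgl {R : Type*} [CommRing R] {n : ℕ} (x : Fin n → R) (a : ℕ → R) (m : ℤ) : R :=
  if 0 ≤ m then
    PowerSeries.coeff m.toNat
      ((∏ i, geom (x i)) * ∏ j ∈ Finset.range (n + m.toNat - 1), lin (a (j + 1)))
  else 0

noncomputable def hsp {R : Type*} [CommRing R] {n : ℕ} (x : Fin n → Rˣ) (a : ℕ → R) (m : ℤ) : R :=
  if 0 ≤ m then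
    PowerSeries.coeff m.toNat
      ((∏ i, geom ((x i : R)) * geom (((x i)⁻¹ : Rˣ) : R)) *
        ∏ j ∈ Finset.range (n + m.toNat - 1), lin (a (j + 1)))
  else 0

noncomputable def hoo {R : Type*} [CommRing R] {n : ℕ} (x : Fin n → Rˣ) (a : ℕ → R) (m : ℤ) : R :=
  if 0 ≤ m then
    PowerSeries.coeff m.toNat
      ((1 + PowerSeries.X) * (∏ i, geom ((x i : R)) * geom (((x i)⁻¹ : Rˣ) : R)) *
        ∏ j ∈ Finset.range (n + m.toNat - 1), lin (a (j + 1)))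
  else 0

noncomputable def heo {R : Type*} [CommRing R] {n : ℕ} (x : Fin n → Rˣ) (a : ℕ → R) (m : ℤ) : R :=
  if 0 ≤ m then
    if h : n = 1 then
      (PowerSeries.coeff m.toNat
        ((geom ((x ⟨0, by omega⟩ : Rˣ) : R) + geom (((x ⟨0, by omega⟩)⁻¹ : Rˣ) : R)) *
          ∏ j ∈ Finset.range m.toNat, lin (a (j + 1))))
        - (if m = 0 then 1 else 0)
    else
      PowerSeries.coeff m.toNat
        ((1 - PowerSeries.X ^ 2) * (∏ i, geom ((x i : R)) * geom (((x i)⁻¹ : Rˣ) : R)) *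
          ∏ j ∈ Finset.range (n + m.toNat - 1), lin (a (j + 1)))
  else 0

noncomputable def heod {R : Type*} [CommRing R] {n : ℕ} (x : Fin n → Rˣ) (a : ℕ → R) (m : ℤ) : R :=
  if 0 < m then
    if h : 0 < n then
      PowerSeries.coeff m.toNat
        ((geom ((x ⟨0, h⟩ : Rˣ) : R) - geom (((x ⟨0, h⟩)⁻¹ : Rˣ) : R)) *
          (∏ i ∈ Finset.univ.filter (fun i : Fin n => i ≠ ⟨0, h⟩),
            geom ((x i : R)) * geom (((x i)⁻¹ : Rˣ) : R)) *
          ∏ j ∈ Finset.range (n + m.toNat - 1), lin (a (j + 1)))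
    else 0
  else 0

/-!
Multiplying a power series by `1 + a t` replaces its coefficients `c k` by `c k + a * c (k - 1)`.
Starting from the geometric series, whose coefficients are `x ^ k`, induction on `m` shows that
after the factors `1 + a_j t`, `j ≤ m`, the coefficient of `t ^ (k + m)` is `x ^ k * (x|a)^m`.
-/

open PowerSeries

section

variable {R : Type*} [CommRing R]

theorem coeff_geom (x : R) (k : ℕ) : coeff k (geom x) = x ^ k :=
  coeff_mk _ _

theorem coeff_succ_mul_lin (f : PowerSeries R) (a : R) (k : ℕ) :
    coeff (k + 1) (f * lin a) = coeff (k + 1) f + a * coeff k f := by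
  rw [lin, mul_add, mul_one, map_add, ← mul_assoc, coeff_succ_mul_X, coeff_mul_C, mul_comm]

theorem facpow_succ (x : R) (a : ℕ → R) (m : ℕ) :
    facpow x a (m + 1) = facpow x a m * (x + a (m + 1)) :=
  prod_range_succ _ _

theorem coeff_add_geom_mul_prod_lin (x : R) (a : ℕ → R) (m k : ℕ) :
    coeff (k + m) (geom x * ∏ j ∈ range m, lin (a (j + 1))) = x ^ k * facpow x a m := by
  induction m generalizing k with
  | zero => simp [coeff_geom, facpow]
  | succ m ih =>
    rw [prod_range_succ, ← mul_assoc, ← add_assoc, coeff_succ_mul_lin, add_right_comm, ih, ih,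
      facpow_succ]
    ring

end

theorem hgl_one_variable {R : Type*} [CommRing R] (x : R) (a : ℕ → R) (m : ℕ) :
    PowerSeries.coeff m (geom x * ∏ j ∈ Finset.range m, lin (a (j + 1))) =
      facpow x a m := by
  simpa using coeff_add_geom_mul_prod_lin x a m 0
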